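/- Let g be a Lie algebra acting on the space Z¹(g; N(g)) of 1-cocycles with values in N(g) = Ker(∇: Λ²g → g). Then for any c ∈ Z¹(g; N(g)), Y, Z ∈ g and k ≥ 1, the iterated action satisfies (Y^k c)(Z) = σ(Z)σ(Y)^{k-1}(c(Y)). -/

import Mathlib

open TensorProduct

/-- The diagonal adjoint action `σ(Y)` on `g ⊗ g`, as an endomorphism (so that powers
`σ(Y)^k` make sense). -/
noncomputable def sig2 (g : Type) [LieRing g] [LieAlgebra ℚ g] (Y : g) :
    Module.End ℚ (g ⊗[ℚ] g) :=
  TensorProduct.map (LieAlgebra.ad ℚ g Y) LinearMap.id +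
    TensorProduct.map LinearMap.id (LieAlgebra.ad ℚ g Y)

/-- The bracket map `∇ : g ⊗ g → g`. -/
noncomputable def brm (g : Type) [LieRing g] [LieAlgebra ℚ g] :
    g ⊗[ℚ] g →ₗ[ℚ] g :=
  TensorProduct.lift (LieAlgebra.ad ℚ g : g →ₗ[ℚ] Module.End ℚ g)

/-- The action of `Y ∈ g` on a `1`-cochain `c : g → Λ²g ⊂ g ⊗ g`:
`(Yc)(Z) = σ(Y)(c(Z)) - c([Y,Z])`. -/
noncomputable def actC (g : Type) [LieRing g] [LieAlgebra ℚ g] (Y : g)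
    (c : g →ₗ[ℚ] g ⊗[ℚ] g) : g →ₗ[ℚ] g ⊗[ℚ] g :=
  (sig2 g Y : g ⊗[ℚ] g →ₗ[ℚ] g ⊗[ℚ] g) ∘ₗ c - c ∘ₗ (LieAlgebra.ad ℚ g Y)

/-! The cocycle identity says exactly that `Yc = σ(·)(c(Y))`, a cochain of the form
`Z ↦ σ(Z) v`. Since `σ` is a representation, `σ(Y)σ(Z) - σ([Y,Z]) = σ(Z)σ(Y)`, so
`Y` maps the cochain `Z ↦ σ(Z) v` to `Z ↦ σ(Z) σ(Y) v`, and the formula follows by induction. -/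

section

variable {g : Type} [LieRing g] [LieAlgebra ℚ g]

lemma sig2_tmul (Y a b : g) :
    sig2 g Y (a ⊗ₜ[ℚ] b) = ⁅Y, a⁆ ⊗ₜ[ℚ] b + a ⊗ₜ[ℚ] ⁅Y, b⁆ := by
  simp [sig2, LieAlgebra.ad_apply]

lemma sig2_lie (Y Z : g) (x : g ⊗[ℚ] g) :
    sig2 g ⁅Y, Z⁆ x = sig2 g Y (sig2 g Z x) - sig2 g Z (sig2 g Y x) := by
  induction x using TensorProduct.induction_on with
  | zero => simp
  | tmul a b =>
    simp only [sig2_tmul, map_add, lie_lie, tmul_sub, sub_tmul]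
    abel
  | add x y hx hy =>
    simp only [map_add, hx, hy]
    abel

lemma actC_apply (Y Z : g) (c : g →ₗ[ℚ] g ⊗[ℚ] g) :
    actC g Y c Z = sig2 g Y (c Z) - c ⁅Y, Z⁆ :=
  rfl

lemma actC_apply_of_cocycle {c : g →ₗ[ℚ] g ⊗[ℚ] g}
    (hc : ∀ Y Z : g, c ⁅Y, Z⁆ = sig2 g Y (c Z) - sig2 g Z (c Y)) (Y Z : g) :
    actC g Y c Z = sig2 g Z (c Y) := by
  rw [actC_apply, hc]
  abel

lemma actC_apply_of_eq_sig2 {c : g →ₗ[ℚ] g ⊗[ℚ] g} {v : g ⊗[ℚ] g}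
    (hc : ∀ Z : g, c Z = sig2 g Z v) (Y Z : g) :
    actC g Y c Z = sig2 g Z (sig2 g Y v) := by
  rw [actC_apply, hc, hc, sig2_lie]
  abel

lemma actC_iterate_succ_apply_of_cocycle {c : g →ₗ[ℚ] g ⊗[ℚ] g}
    (hc : ∀ Y Z : g, c ⁅Y, Z⁆ = sig2 g Y (c Z) - sig2 g Z (c Y)) (Y : g) (k : ℕ) (Z : g) :
    ((actC g Y)^[k + 1] c) Z = sig2 g Z ((sig2 g Y ^ k) (c Y)) := by
  induction k generalizing Z with
  | zero => exact actC_apply_of_cocycle hc Y Z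
  | succ k ih =>
    rw [Function.iterate_succ_apply', actC_apply_of_eq_sig2 ih, pow_succ',
      Module.End.mul_apply]

end

theorem stmt13_general (g : Type) [LieRing g] [LieAlgebra ℚ g]
    (c : g →ₗ[ℚ] g ⊗[ℚ] g)
    (hcocycle : ∀ Y Z : g, c ⁅Y, Z⁆ = sig2 g Y (c Z) - sig2 g Z (c Y)) :
    ∀ (Y Z : g) (k : ℕ), 1 ≤ k →
      ((actC g Y)^[k] c) Z = sig2 g Z ((sig2 g Y ^ (k - 1)) (c Y)) := by
  intro Y Z k hk
  obtain ⟨k, rfl⟩ := Nat.exists_eq_add_of_le' hk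
  exact actC_iterate_succ_apply_of_cocycle hcocycle Y k Z

/-- for a 1-cocycle `c ∈ Z¹(g; N(g))` (values in `N(g) = Ker ∇ ⊂ Λ²g`),
and any `Y, Z ∈ g`, `k ≥ 1`, the iterated action satisfies
`(Y^k c)(Z) = σ(Z) σ(Y)^{k-1} (c(Y))`. -/
theorem stmt13 (g : Type) [LieRing g] [LieAlgebra ℚ g]
    (c : g →ₗ[ℚ] g ⊗[ℚ] g)
    (hcval₁ : ∀ Z : g, TensorProduct.comm ℚ g g (c Z) = - c Z)
    (hcval₂ : ∀ Z : g, brm g (c Z) = 0)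
    (hcocycle : ∀ Y Z : g, c ⁅Y, Z⁆ = sig2 g Y (c Z) - sig2 g Z (c Y)) :
    ∀ (Y Z : g) (k : ℕ), 1 ≤ k →
      ((actC g Y)^[k] c) Z = sig2 g Z ((sig2 g Y ^ (k - 1)) (c Y)) :=
  stmt13_general g c hcocycle
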